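/- Let n ≥ 1 and let Q_1, …, Q_{n²} be n×n complex Hermitian matrices forming an orthonormal family with respect to the real inner product ⟨A,B⟩ = Re tr(A Bᴴ). Then for every index α ∈ {1, …, n²}, the exact identity Σ_{β=1}^{n²} ‖[Q_α, Q_β]‖² = 2n − 2 (Re tr Q_α)² holds. -/

import Mathlib

open Matrix

/-- Squared Frobenius norm of a complex matrix: `Re tr (A Aᴴ)`. -/
noncomputable def frobSq {n : ℕ} (A : Matrix (Fin n) (Fin n) ℂ) : ℝ :=
  ((A * Aᴴ).trace).re

/-- Real inner product on complex matrices: `Re tr (A Bᴴ)`. -/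
noncomputable def minner {n : ℕ} (A B : Matrix (Fin n) (Fin n) ℂ) : ℝ :=
  ((A * Bᴴ).trace).re

/-- Commutator of matrices. -/
noncomputable def mcomm {n : ℕ} (A B : Matrix (Fin n) (Fin n) ℂ) : Matrix (Fin n) (Fin n) ℂ :=
  A * B - B * A

theorem commutator_sum_identity (n : ℕ) (hn : 1 ≤ n)
    (Q : Fin (n ^ 2) → Matrix (Fin n) (Fin n) ℂ)
    (hHerm : ∀ α, (Q α)ᴴ = Q α)
    (hON : ∀ α β, minner (Q α) (Q β) = if α = β then 1 else 0)
    (α : Fin (n ^ 2)) :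
    ∑ β : Fin (n ^ 2), frobSq (mcomm (Q α) (Q β)) =
      2 * n - 2 * ((Q α).trace.re) ^ 2 := by
  classical
  -- complex orthonormality
  have hONC : ∀ β γ, (Q β * (Q γ)ᴴ).trace = ((if β = γ then 1 else 0 : ℝ) : ℂ) := by
    intro β γ
    have hst : star ((Q β * (Q γ)ᴴ).trace) = (Q β * (Q γ)ᴴ).trace := by
      rw [← Matrix.trace_conjTranspose, conjTranspose_mul, conjTranspose_conjTranspose,
        hHerm β, hHerm γ, Matrix.trace_mul_comm]
    have him : ((Q β * (Q γ)ᴴ).trace).im = 0 := by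
      have := congrArg Complex.im hst
      simp [Complex.star_def] at this
      linarith
    have hre := hON β γ
    unfold minner at hre
    apply Complex.ext <;> simp [hre, him]
  -- the family as vectors of EuclideanSpace
  set v : Fin (n ^ 2) → EuclideanSpace ℂ (Fin n × Fin n) :=
    fun β => WithLp.toLp 2 (fun p : Fin n × Fin n => Q β p.1 p.2) with hv
  haveI : Nonempty (Fin (n ^ 2)) := ⟨⟨0, by positivity⟩⟩
  have key : ∀ β γ, (inner ℂ (v β) (v γ) : ℂ) = star ((Q β * (Q γ)ᴴ).trace) := by
    intro β γ
    simp only [PiLp.inner_apply, RCLike.inner_apply, Matrix.trace, Matrix.diag,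
      Matrix.mul_apply, Matrix.conjTranspose_apply, star_sum, star_mul', star_star, hv]
    rw [← Finset.univ_product_univ, Finset.sum_product]
    simp [Complex.star_def, mul_comm]
  have hvon : Orthonormal ℂ v := by
    rw [orthonormal_iff_ite]
    intro β γ
    rw [key, hONC]
    by_cases h : β = γ <;> simp [h]
  have hspan : Submodule.span ℂ (Set.range v) = ⊤ := by
    apply hvon.linearIndependent.span_eq_top_of_card_eq_finrank
    simp [finrank_euclideanSpace, sq]
  let b : OrthonormalBasis (Fin (n ^ 2)) ℂ (EuclideanSpace ℂ (Fin n × Fin n)) :=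
    OrthonormalBasis.mk hvon hspan.ge
  have hb : ∀ β, b β = v β := fun β => by
    rw [show (b : Fin (n^2) → _) = v from OrthonormalBasis.coe_mk hvon hspan.ge]
  -- completeness relation
  have comp : ∀ (a j c k : Fin n),
      ∑ β, Q β a j * star (Q β c k) = if a = c ∧ j = k then 1 else 0 := by
    intro a j c k
    have e1 : ∀ β, (inner ℂ (EuclideanSpace.single (a, j) (1 : ℂ)) (b β) : ℂ) = Q β a j := by
      intro β
      rw [EuclideanSpace.inner_single_left, hb]
      simp [hv]
    have e2 : ∀ β, (inner ℂ (b β) (EuclideanSpace.single (c, k) (1 : ℂ)) : ℂ)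
        = star (Q β c k) := by
      intro β
      rw [EuclideanSpace.inner_single_right, hb]
      simp [hv, Complex.star_def]
    have e3 : (inner ℂ (EuclideanSpace.single (a, j) (1 : ℂ))
          (EuclideanSpace.single (c, k) (1 : ℂ)) : ℂ)
        = if a = c ∧ j = k then 1 else 0 := by
      rw [EuclideanSpace.inner_single_left]
      simp [EuclideanSpace.single_apply, Prod.ext_iff]
    calc ∑ β, Q β a j * star (Q β c k)
        = ∑ β, (inner ℂ (EuclideanSpace.single (a, j) (1 : ℂ)) (b β) : ℂ)
            * (inner ℂ (b β) (EuclideanSpace.single (c, k) (1 : ℂ)) : ℂ) := by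
          exact (Finset.sum_congr rfl fun β _ => by rw [e1, e2]).symm
      _ = _ := by rw [b.sum_inner_mul_inner, e3]
  -- key superoperator identity
  have hK : ∀ X : Matrix (Fin n) (Fin n) ℂ,
      ∑ β, Q β * X * Q β = X.trace • (1 : Matrix (Fin n) (Fin n) ℂ) := by
    intro X
    ext a c
    rw [Matrix.sum_apply]
    have step : ∀ β, (Q β * X * Q β) a c
        = ∑ k, ∑ j, Q β a j * X j k * Q β k c := by
      intro β
      simp only [Matrix.mul_apply, Finset.sum_mul]
    rw [Finset.sum_congr rfl fun β _ => step β]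
    rw [Finset.sum_comm]
    have inner1 : ∀ k, ∑ β, ∑ j, Q β a j * X j k * Q β k c
        = ∑ j, X j k * (if a = c ∧ j = k then 1 else 0) := by
      intro k
      rw [Finset.sum_comm]
      apply Finset.sum_congr rfl
      intro j _
      have hq : ∀ β, Q β k c = star (Q β c k) := by
        intro β
        conv_lhs => rw [← hHerm β]
        simp [Matrix.conjTranspose_apply]
      calc ∑ β, Q β a j * X j k * Q β k c
          = X j k * ∑ β, Q β a j * star (Q β c k) := by
            rw [Finset.mul_sum]
            apply Finset.sum_congr rfl
            intro β _
            rw [hq β]; ring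
        _ = X j k * (if a = c ∧ j = k then 1 else 0) := by rw [comp]
    rw [Finset.sum_congr rfl fun k _ => inner1 k]
    simp only [Matrix.smul_apply, Matrix.one_apply, Matrix.trace, Matrix.diag, smul_eq_mul]
    by_cases h : a = c
    · simp [h, Finset.sum_ite_eq, mul_comm]
    · simp [h]
  set A := Q α with hA
  have hA' : Aᴴ = A := hHerm α
  -- trace algebra
  have rot : ∀ W X Y Z : Matrix (Fin n) (Fin n) ℂ,
      (W*(X*(Y*Z))).trace = (X*(Y*(Z*W))).trace := by
    intro W X Y Z
    rw [Matrix.trace_mul_comm]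
    simp only [mul_assoc]
  have h1 : ∀ B : Matrix (Fin n) (Fin n) ℂ,
      ((A*B - B*A) * (B*A - A*B)).trace
        = 2*(A*(A*(B*B))).trace - 2*(A*(B*(A*B))).trace := by
    intro B
    simp only [Matrix.sub_mul, Matrix.mul_sub, Matrix.trace_sub, mul_assoc]
    rw [rot A B B A, rot B B A A, rot B A A B, rot B A B A]
    ring
  have hfr : ∀ β, frobSq (mcomm A (Q β))
      = (2*(A*(A*(Q β*Q β))).trace - 2*(A*(Q β*(A*Q β))).trace).re := by
    intro β
    unfold frobSq mcomm
    congr 1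
    rw [show (A * Q β - Q β * A)ᴴ = Q β * A - A * Q β by
      rw [conjTranspose_sub, conjTranspose_mul, conjTranspose_mul, hA', hHerm β]]
    exact h1 (Q β)
  rw [Finset.sum_congr rfl fun β _ => hfr β]
  rw [← Complex.re_sum]
  have hsum : ∑ β, (2*(A*(A*(Q β*Q β))).trace - 2*(A*(Q β*(A*Q β))).trace)
      = 2*((n:ℂ)*(A*A).trace) - 2*(A.trace*A.trace) := by
    rw [Finset.sum_sub_distrib, ← Finset.mul_sum, ← Finset.mul_sum]
    congr 2
    · -- ∑ tr(A*(A*(Qβ*Qβ))) = n * tr(A*A)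
      have hQQ : ∑ β, Q β * Q β = (n:ℂ) • (1 : Matrix (Fin n) (Fin n) ℂ) := by
        have := hK 1
        simp only [Matrix.mul_one] at this
        rw [this, Matrix.trace_one]
        simp
      calc ∑ β, (A*(A*(Q β*Q β))).trace = (∑ β, A*(A*(Q β*Q β))).trace := by
            rw [Matrix.trace_sum]
        _ = (A*(A*(∑ β, Q β * Q β))).trace := by rw [Finset.mul_sum, Finset.mul_sum]
        _ = (n:ℂ) * (A*A).trace := by
            rw [hQQ]
            rw [Matrix.mul_smul, Matrix.mul_smul, Matrix.mul_one, Matrix.trace_smul]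
            simp [mul_assoc]
    · -- ∑ tr(A*(Qβ*(A*Qβ))) = tr A * tr A
      have step : ∀ β, (A*(Q β*(A*Q β))).trace = ((Q β * A * Q β) * A).trace := by
        intro β
        rw [Matrix.trace_mul_comm]
        simp only [mul_assoc]
      rw [Finset.sum_congr rfl fun β _ => step β]
      calc ∑ β, ((Q β * A * Q β) * A).trace = ((∑ β, Q β * A * Q β) * A).trace := by
            rw [← Matrix.trace_sum]
            congr 1
            rw [Finset.sum_mul]
        _ = ((A.trace • (1 : Matrix (Fin n) (Fin n) ℂ)) * A).trace := by rw [hK]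
        _ = A.trace * A.trace := by
            rw [Matrix.smul_mul, Matrix.one_mul, Matrix.trace_smul]
            simp
  rw [hsum]
  -- numerics
  have hAA : (A*A).trace = 1 := by
    have h := hONC α α
    simp only [if_pos rfl, Complex.ofReal_one] at h
    rw [← hA, hA'] at h
    exact h
  have htr : A.trace = (A.trace.re : ℂ) := by
    have hst : star A.trace = A.trace := by
      rw [← Matrix.trace_conjTranspose, hA']
    have him : A.trace.im = 0 := by
      have := congrArg Complex.im hst
      simp [Complex.star_def] at this
      linarith
    exact Complex.ext (by simp) (by simp [him])
  rw [hAA, htr]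
  rw [show 2*((n:ℂ)*1) - 2*((A.trace.re : ℂ)*(A.trace.re : ℂ))
      = ((2*n - 2*(A.trace.re)^2 : ℝ) : ℂ) by push_cast; ring]
  exact Complex.ofReal_re _
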